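/- If a week had d ≥ 1 days, then in the sample space ({B,G} × Fin d)² with uniform measure, the conditional probability of two boys given at least one boy born on a fixed day t equals (2d−1)/(4d−1). -/

import Mathlib

inductive Gender | B | G deriving DecidableEq

instance instFintypeGender : Fintype Gender :=
  ⟨{Gender.B, Gender.G}, fun x => by cases x <;> simp⟩

/-- Conditional probability under the uniform distribution on a finite type. -/
def condProb {α : Type*} [Fintype α] (A E : α → Prop) [DecidablePred A] [DecidablePred E] : ℚ :=
  ((Finset.univ.filter fun s => A s ∧ E s).card : ℚ) / ((Finset.univ.filter E).card : ℚ)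

/-!
For `a ∈ s`, the pairs in `s ×ˢ s` having `a` as a coordinate form `{a} ×ˢ s ∪ s ×ˢ {a}`, two
copies of `s` meeting only in `(a, a)`, so there are `2 * #s - 1` of them. The conditioning event
is the case `s = univ` (with `#s = 2d`), the joint event the case where `s` is the set of boys
(with `#s = d`), giving `(2d - 1) / (4d - 1)`.
-/

open Finset

theorem card_filter_fst_eq_or_snd_eq_add_one {α : Type*} [DecidableEq α] {s : Finset α} {a : α}
    (ha : a ∈ s) : #((s ×ˢ s).filter fun p => p.1 = a ∨ p.2 = a) + 1 = 2 * #s := by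
  have hunion : ((s ×ˢ s).filter fun p => p.1 = a ∨ p.2 = a) = {a} ×ˢ s ∪ s ×ˢ {a} := by
    ext ⟨x, y⟩
    simp only [mem_filter, mem_product, mem_union, mem_singleton]
    constructor
    · rintro ⟨⟨hx, hy⟩, rfl | rfl⟩
      exacts [Or.inl ⟨rfl, hy⟩, Or.inr ⟨hx, rfl⟩]
    · rintro (⟨rfl, hy⟩ | ⟨hx, rfl⟩)
      exacts [⟨⟨ha, hy⟩, Or.inl rfl⟩, ⟨⟨hx, ha⟩, Or.inr rfl⟩]
  have hinter : ({a} ×ˢ s ∩ s ×ˢ {a} : Finset (α × α)) = {(a, a)} := by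
    rw [product_inter_product, singleton_inter_of_mem ha, inter_singleton_of_mem ha,
      singleton_product_singleton]
  have := card_union_add_card_inter ({a} ×ˢ s) (s ×ˢ {a})
  rw [hinter, card_singleton, card_product, card_product, card_singleton] at this
  rw [hunion, this]
  ring

theorem stmt_11_general (d : ℕ) (t : Fin d) :
    condProb (fun s : (Gender × Fin d) × (Gender × Fin d) =>
        s.1.1 = Gender.B ∧ s.2.1 = Gender.B)
      (fun s => s.1 = (Gender.B, t) ∨ s.2 = (Gender.B, t)) =
      (2 * (d : ℚ) - 1) / (4 * (d : ℚ) - 1) := by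
  set boys : Finset (Gender × Fin d) := {Gender.B} ×ˢ univ
  have hboys : #boys = d := by simp [boys]
  have hnum_eq : (univ.filter fun s : (Gender × Fin d) × (Gender × Fin d) =>
      (s.1.1 = Gender.B ∧ s.2.1 = Gender.B) ∧ (s.1 = (Gender.B, t) ∨ s.2 = (Gender.B, t))) =
      (boys ×ˢ boys).filter fun s => s.1 = (Gender.B, t) ∨ s.2 = (Gender.B, t) := by
    ext s
    simp only [boys, mem_filter, mem_univ, mem_product, mem_singleton, true_and, and_true]
  have hnum := card_filter_fst_eq_or_snd_eq_add_one (s := boys) (a := (Gender.B, t))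
    (by simp [boys])
  have hden := card_filter_fst_eq_or_snd_eq_add_one (mem_univ (Gender.B, t))
  rw [hboys] at hnum
  rw [univ_product_univ, card_univ, Fintype.card_prod, Fintype.card_fin,
    show Fintype.card Gender = 2 from rfl] at hden
  qify at hnum hden
  rw [← eq_sub_iff_add_eq] at hnum hden
  unfold condProb
  rw [hnum_eq, hnum, hden]
  ring

theorem stmt_11 (d : ℕ) (hd : 1 ≤ d) (t : Fin d) :
    condProb (fun s : (Gender × Fin d) × (Gender × Fin d) =>
        s.1.1 = Gender.B ∧ s.2.1 = Gender.B)
      (fun s => s.1 = (Gender.B, t) ∨ s.2 = (Gender.B, t)) =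
      (2 * (d : ℚ) - 1) / (4 * (d : ℚ) - 1) :=
  stmt_11_general d t
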